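/- arXiv:1306.4827 — 7 statements merged into one kernel-verified Lean document; each statement's English description precedes it below -/
import Mathlib

section
/- Let S be a transformation semigroup on a finite set Ω, and let Gr(S) be the graph on vertex set Ω where v and w are adjacent iff no element of S maps v and w to the same point. Then S contains a constant map (a map of rank 1) if and only if Gr(S) is the null graph (has no edges). -/
open Finset

variable {Ω : Type*} [Fintype Ω] [DecidableEq Ω]

/-- The graph associated to a set of transformations: `v ~ w` iff no `f ∈ S` collapses them. -/
def Gr (S : Set (Ω → Ω)) : SimpleGraph Ω where
  Adj v w := v ≠ w ∧ ∀ f ∈ S, f v ≠ f w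
  symm := by constructor; rintro v w ⟨h1, h2⟩; exact ⟨h1.symm, fun f hf => (h2 f hf).symm⟩
  loopless := by constructor; rintro v ⟨h, _⟩; exact h rfl

/-- The rank of a transformation of a finite set: the size of its image. -/
def rank (f : Ω → Ω) : ℕ := (Finset.univ.image f).card

/-- A permutation group is primitive if it is transitive and all blocks are trivial. -/
def IsPrimitive (G : Subgroup (Equiv.Perm Ω)) : Prop :=
  MulAction.IsPretransitive G Ω ∧
    ∀ B : Set Ω, MulAction.IsBlock G B → B.Subsingleton ∨ B = Set.univ

/-- The semigroup generated by a permutation group `G` and a transformation `f`. -/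
def genSemigroup (G : Subgroup (Equiv.Perm Ω)) (f : Ω → Ω) : Subsemigroup (Function.End Ω) :=
  Subsemigroup.closure ((fun g : Equiv.Perm Ω => (g : Ω → Ω)) '' (G : Set (Equiv.Perm Ω)) ∪ {f})

/-- `G` synchronizes `f` if `⟨G, f⟩` contains a constant map. -/
def Synchronizes (G : Subgroup (Equiv.Perm Ω)) (f : Ω → Ω) : Prop :=
  ∃ h ∈ genSemigroup G f, ∃ c : Ω, ∀ x : Ω, h x = c

/-- `f` has kernel type `(k,1,…,1)`: one kernel class of size `k`, all others singletons. -/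
def KernelTypeK (f : Ω → Ω) (k : ℕ) : Prop :=
  ∃ A : Finset Ω, A.card = k ∧ (∀ x ∈ A, ∀ y ∈ A, f x = f y) ∧
    ∀ x y : Ω, f x = f y → x = y ∨ (x ∈ A ∧ y ∈ A)

/-- `f` has kernel type `(3,2,1,…,1)`. -/
def KernelType32 (f : Ω → Ω) : Prop :=
  ∃ A B : Finset Ω, A.card = 3 ∧ B.card = 2 ∧
    (∀ x ∈ A, ∀ y ∈ A, f x = f y) ∧ (∀ x ∈ B, ∀ y ∈ B, f x = f y) ∧
    ∀ x y : Ω, f x = f y → x = y ∨ (x ∈ A ∧ y ∈ A) ∨ (x ∈ B ∧ y ∈ B)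

theorem exists_eq_const_of_rank_le_one [Nonempty Ω] {f : Ω → Ω} (h : rank f ≤ 1) :
    ∃ c, ∀ x, f x = c :=
  ⟨f (Classical.arbitrary Ω), fun x =>
    Finset.card_le_one.mp h _ (mem_image_of_mem f (mem_univ x)) _
      (mem_image_of_mem f (mem_univ _))⟩

theorem exists_apply_ne_of_one_lt_rank {f : Ω → Ω} (h : 1 < rank f) : ∃ a b, f a ≠ f b := by
  obtain ⟨_, ha, _, hb, hne⟩ := Finset.one_lt_card.mp h
  obtain ⟨a, -, rfl⟩ := mem_image.mp ha
  obtain ⟨b, -, rfl⟩ := mem_image.mp hb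
  exact ⟨a, b, hne⟩

theorem rank_comp_lt {f g : Ω → Ω} {a b : Ω} (hab : f a ≠ f b) (hg : g (f a) = g (f b)) :
    rank (g ∘ f) < rank f := by
  have hnotinj : ¬ Set.InjOn g (univ.image f : Finset Ω) := fun hinj =>
    hab (hinj (by simp) (by simp) hg)
  rw [rank, rank, ← image_image]
  exact lt_of_le_of_ne card_image_le (mt card_image_iff.mp hnotinj)

theorem exists_const_mem_of_collapsing [Nonempty Ω] {S : Set (Ω → Ω)}
    (hS : ∀ f ∈ S, ∀ g ∈ S, g ∘ f ∈ S) (hcollapse : ∀ v w, v ≠ w → ∃ g ∈ S, g v = g w)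
    (f : Ω → Ω) (hf : f ∈ S) : ∃ h ∈ S, ∃ c, ∀ x, h x = c := by
  induction hr : rank f using Nat.strong_induction_on generalizing f with
  | _ n ih =>
    rcases le_or_gt (rank f) 1 with hle | hlt
    · exact ⟨f, hf, exists_eq_const_of_rank_le_one hle⟩
    · obtain ⟨a, b, hab⟩ := exists_apply_ne_of_one_lt_rank hlt
      obtain ⟨g, hg, hgab⟩ := hcollapse _ _ hab
      exact ih _ (hr ▸ rank_comp_lt hab hgab) (g ∘ f) (hS f hf g hg) rfl

theorem stmt0 [Nonempty Ω] (S : Set (Ω → Ω)) (hne : S.Nonempty)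
    (hS : ∀ f ∈ S, ∀ g ∈ S, (g ∘ f) ∈ S) :
    (∃ f ∈ S, ∃ c : Ω, ∀ x : Ω, f x = c) ↔ ∀ v w : Ω, ¬ (Gr S).Adj v w := by
  constructor
  · rintro ⟨f, hf, c, hc⟩ v w ⟨-, hnot⟩
    exact hnot f hf (by rw [hc v, hc w])
  · intro hnull
    obtain ⟨f, hf⟩ := hne
    refine exists_const_mem_of_collapsing hS (fun v w hvw => ?_) f hf
    by_contra! hsep
    exact hnull v w ⟨hvw, hsep⟩
end

section
/- Let S be a transformation semigroup on a finite set Ω, and Gr(S) the graph joining v,w iff no element of S collapses them. Then Gr(End(Gr(S))) = Gr(S). -/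
open Finset

variable {Ω : Type*} [Fintype Ω] [DecidableEq Ω]

def graphEnd {α : Type*} (X : SimpleGraph α) : Set (α → α) :=
  {f | ∀ v w : α, X.Adj v w → X.Adj (f v) (f w)}

theorem Gr_anti {α : Type*} {S T : Set (α → α)} (h : S ⊆ T) : Gr T ≤ Gr S :=
  fun _ _ ⟨hvw, hT⟩ => ⟨hvw, fun f hf => hT f (h hf)⟩

theorem le_Gr_graphEnd {α : Type*} (X : SimpleGraph α) : X ≤ Gr (graphEnd X) :=
  fun v w hvw => ⟨hvw.ne, fun _ hf => (hf v w hvw).ne⟩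

theorem subset_graphEnd_Gr {α : Type*} {S : Set (α → α)} (hS : ∀ f ∈ S, ∀ g ∈ S, g ∘ f ∈ S) :
    S ⊆ graphEnd (Gr S) :=
  fun f hf _ _ ⟨_, hvw⟩ => ⟨hvw f hf, fun g hg => hvw (g ∘ f) (hS f hf g hg)⟩

theorem stmt2_general (S : Set (Ω → Ω))
    (hS : ∀ f ∈ S, ∀ g ∈ S, (g ∘ f) ∈ S) :
    Gr {f : Ω → Ω | ∀ v w : Ω, (Gr S).Adj v w → (Gr S).Adj (f v) (f w)} = Gr S :=
  le_antisymm (Gr_anti (subset_graphEnd_Gr hS)) (le_Gr_graphEnd (Gr S))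

theorem stmt2 (S : Set (Ω → Ω)) (hne : S.Nonempty)
    (hS : ∀ f ∈ S, ∀ g ∈ S, (g ∘ f) ∈ S) :
    Gr {f : Ω → Ω | ∀ v w : Ω, (Gr S).Adj v w → (Gr S).Adj (f v) (f w)} = Gr S :=
  stmt2_general S hS
end

section
/- Every finite simple graph is isomorphic to an induced subgraph of a graph whose automorphism group is primitive on vertices. -/
open Finset

variable {Ω : Type*} [Fintype Ω] [DecidableEq Ω]

/-!
Number the vertices of `H` and send the `i`-th one to `2 ^ i ∈ ZMod p` for a prime
`p ≥ 2 ^ (|V| + 1)`. A sum of two powers of two determines the two exponents, and no wrap-around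
occurs mod `p`, so these residues form a Sidon set. Hence in the Cayley graph of `ZMod p` whose
connection set consists of the differences `2 ^ i - 2 ^ j` along edges of `H`, the image of `H` is
an induced subgraph. Translations are automorphisms of this graph, so its automorphism group is
transitive on a set of prime size, and therefore primitive.
-/

theorem Nat.two_pow_add_two_pow_inj {a b c d : ℕ} (h : 2 ^ a + 2 ^ b = 2 ^ c + 2 ^ d) :
    (a = c ∧ b = d) ∨ (a = d ∧ b = c) := by
  wlog hab : a ≤ b generalizing a b
  · rcases this (b := a) (a := b) (by rw [add_comm, h]) (by omega) with h | h <;> omega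
  wlog hcd : c ≤ d generalizing c d
  · rcases this (d := c) (c := d) (by rw [h, add_comm]) (by omega) with h | h <;> omega
  wlog hac : a ≤ c generalizing a b c d
  · rcases this hcd h.symm hab (by omega) with h | h <;> omega
  obtain ⟨k, rfl⟩ := Nat.exists_eq_add_of_le hac
  obtain ⟨m, rfl⟩ := Nat.exists_eq_add_of_le hab
  obtain ⟨l, rfl⟩ := Nat.exists_eq_add_of_le hcd
  have hcancel : 1 + 2 ^ m = 2 ^ k + 2 ^ k * 2 ^ l := by
    apply Nat.eq_of_mul_eq_mul_left (Nat.two_pow_pos a)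
    simpa only [pow_add, mul_add, mul_one, mul_assoc] using h
  rcases k with _ | k
  · have : m = l := Nat.pow_right_injective le_rfl (by simpa using hcancel)
    omega
  · -- the right side is even, so `m = 0`, and then the right side is too large
    exfalso
    rcases m with _ | m
    · have := Nat.one_le_two_pow (n := l)
      rw [pow_succ] at hcancel
      nlinarith [Nat.one_le_two_pow (n := k)]
    · rw [pow_succ', pow_succ', mul_assoc] at hcancel
      omega

def IsSidon {V A : Type*} [Add A] (e : V → A) : Prop :=
  ∀ ⦃v w a b⦄, e v + e w = e a + e b → (v = a ∧ w = b) ∨ (v = b ∧ w = a)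

theorem isSidon_two_pow : IsSidon (2 ^ · : ℕ → ℕ) := fun _ _ _ _ => Nat.two_pow_add_two_pow_inj

namespace IsSidon

variable {V U A : Type*}

theorem injective [Add A] {e : V → A} (he : IsSidon e) : Function.Injective e := fun v w h => by
  rcases he (congrArg (· + e v) h) with ⟨h, -⟩ | ⟨-, h⟩ <;> exact h

theorem comp [Add A] {e : V → A} (he : IsSidon e) {f : U → V} (hf : Function.Injective f) :
    IsSidon (e ∘ f) := fun _ _ _ _ h => by
  rcases he h with ⟨h₁, h₂⟩ | ⟨h₁, h₂⟩
  exacts [Or.inl ⟨hf h₁, hf h₂⟩, Or.inr ⟨hf h₁, hf h₂⟩]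

theorem natCast_zmod {e : V → ℕ} (he : IsSidon e) {p : ℕ} (hp : ∀ v w, e v + e w < p) :
    IsSidon (fun v => (e v : ZMod p)) := fun v w a b h => by
  apply he
  have := congrArg ZMod.val h
  rwa [← Nat.cast_add, ← Nat.cast_add, ZMod.val_cast_of_lt (hp v w),
    ZMod.val_cast_of_lt (hp a b)] at this

end IsSidon

def SimpleGraph.cayleyGraph {A : Type*} [AddGroup A] (S : Set A) : SimpleGraph A :=
  SimpleGraph.fromRel fun x y => x - y ∈ S

theorem SimpleGraph.cayleyGraph_adj_add_left {A : Type*} [AddCommGroup A] (S : Set A) (d x y : A) :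
    (cayleyGraph S).Adj (d + x) (d + y) ↔ (cayleyGraph S).Adj x y := by
  simp [cayleyGraph, add_sub_add_left_eq_sub]

theorem IsSidon.adj_iff_cayleyGraph_adj {V A : Type*} [AddCommGroup A] {e : V → A}
    (he : IsSidon e) (H : SimpleGraph V) (v w : V) :
    H.Adj v w ↔
      (SimpleGraph.cayleyGraph {x | ∃ a b, H.Adj a b ∧ e a - e b = x}).Adj (e v) (e w) := by
  have adj_of_diff {x y : V} : (∃ a b, H.Adj a b ∧ e a - e b = e x - e y) → H.Adj x y := by
    rintro ⟨a, b, hab, hdiff⟩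
    rcases he (sub_eq_sub_iff_add_eq_add.mp hdiff) with ⟨rfl, rfl⟩ | ⟨rfl, -⟩
    exacts [hab, (hab.ne rfl).elim]
  simp only [SimpleGraph.cayleyGraph, SimpleGraph.fromRel_adj, Set.mem_ofPred_eq]
  refine ⟨fun h => ⟨he.injective.ne h.ne, .inl ⟨v, w, h, rfl⟩⟩, ?_⟩
  rintro ⟨-, h | h⟩
  exacts [adj_of_diff h, (adj_of_diff h).symm]

def SimpleGraph.autSubgroup {W : Type*} (X : SimpleGraph W) : Subgroup (Equiv.Perm W) where
  carrier := {g | ∀ v w, X.Adj (g v) (g w) ↔ X.Adj v w}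
  mul_mem' {g h} hg hh v w := (hg (h v) (h w)).trans (hh v w)
  one_mem' _ _ := Iff.rfl
  inv_mem' {g} hg v w := by simpa using (hg (g⁻¹ v) (g⁻¹ w)).symm

theorem isPrimitive_of_prime_card {α : Type*} [Fintype α] (G : Subgroup (Equiv.Perm α))
    [MulAction.IsPretransitive G α] (hp : (Fintype.card α).Prime) : IsPrimitive G := by
  have := MulAction.IsPreprimitive.of_prime_card (G := G) (Nat.card_eq_fintype_card (α := α) ▸ hp)
  exact ⟨inferInstance, fun _ hB => this.isTrivialBlock_of_isBlock hB⟩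

theorem SimpleGraph.isPretransitive_autSubgroup_cayleyGraph {A : Type*} [AddCommGroup A]
    (S : Set A) : MulAction.IsPretransitive (cayleyGraph S).autSubgroup A :=
  ⟨fun x y => ⟨⟨Equiv.addLeft (y - x), cayleyGraph_adj_add_left S _⟩, sub_add_cancel y x⟩⟩

theorem isPrimitive_autSubgroup_cayleyGraph (p : ℕ) [Fact p.Prime] (S : Set (ZMod p)) :
    IsPrimitive (SimpleGraph.cayleyGraph S).autSubgroup :=
  have := SimpleGraph.isPretransitive_autSubgroup_cayleyGraph S
  isPrimitive_of_prime_card _ (by rw [ZMod.card]; exact Fact.out)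

theorem stmt8 {V : Type*} [Fintype V] (H : SimpleGraph V) :
    ∃ (W : Type) (_ : Fintype W) (X : SimpleGraph W) (G : Subgroup (Equiv.Perm W)),
      (∀ g : Equiv.Perm W, g ∈ G ↔ ∀ v w : W, X.Adj (g v) (g w) ↔ X.Adj v w) ∧
      IsPrimitive G ∧ ∃ f : V ↪ W, ∀ v w : V, H.Adj v w ↔ X.Adj (f v) (f w) := by
  classical
  obtain ⟨p, hp_le, hp⟩ := Nat.exists_infinite_primes (2 ^ (Fintype.card V + 1))
  have : Fact p.Prime := ⟨hp⟩
  have hsum : ∀ i j : Fin (Fintype.card V), 2 ^ (i : ℕ) + 2 ^ (j : ℕ) < p := fun i j => by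
    have := Nat.pow_lt_pow_right (a := 2) (by norm_num) i.2
    have := Nat.pow_lt_pow_right (a := 2) (by norm_num) j.2
    rw [pow_succ] at hp_le
    omega
  have he := ((isSidon_two_pow.comp Fin.val_injective).natCast_zmod hsum).comp
    (Fintype.equivFin V).injective
  exact ⟨ZMod p, inferInstance, _, (SimpleGraph.cayleyGraph _).autSubgroup, fun _ => Iff.rfl,
    isPrimitive_autSubgroup_cayleyGraph p _, ⟨_, he.injective⟩, he.adj_iff_cayleyGraph_adj H⟩
end

section
/- Let G be a primitive permutation group on a finite set Ω with |Ω| > 2. Then G synchronizes every idempotent map f with kernel type (3,2,1,…,1). -/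
/-!
Suppose `G` does not synchronize `f`, and let `S = ⟨G, f⟩`. In the graph `Gr S` (points are
adjacent when no element of `S` collapses them) every element of `S` is an endomorphism, `G` acts
vertex-transitively, and an element of `S` of minimal rank exhibits an edge. If some `h ∈ S`
collapsed `u ≠ v` while being injective on `N(u) ∪ N(v)`, it would map both neighbourhoods onto
`N(h u)`, so `N(u) = N(v)`; by primitivity all neighbourhoods would coincide, which is absurd.

An idempotent of kernel type `(3,2,1,…,1)` fixes every point except `x₁, x₂ ↦ a` and one further
point `y`. The above, applied to `f`, `a`, `x₂`, makes `y` adjacent to `a` or `x₂`. Counting then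
shows that a largest fibre of an element of `S` containing `a` also contains `x₁`. Applied to all
`G`-translates of one largest fibre `P`, this gives `g a ∈ P → g x₁ ∈ P` for all `g ∈ G`, whence
by primitivity `P` is everything, i.e. `S` contains a constant map.
-/

open Finset

variable {Ω : Type*} [Fintype Ω] [DecidableEq Ω]

namespace MulAction

variable {G X β : Type*} [Group G] [MulAction G X]

theorem IsPreprimitive.apply_eq_apply_of_ker_invariant [IsPreprimitive G X] {φ : X → β}
    (hφ : ∀ (g : G) {x y : X}, φ x = φ y → φ (g • x) = φ (g • y)) {u v : X} (huv : u ≠ v)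
    (h : φ u = φ v) (x y : X) : φ x = φ y := by
  have hB : IsBlock G (φ ⁻¹' {φ u}) := by
    refine isBlock_iff_smul_eq_of_mem.2 fun g a ha hga => Set.ext fun w => ?_
    simp only [Set.mem_smul_set_iff_inv_smul_mem, Set.mem_preimage,
      Set.mem_singleton_iff] at ha hga ⊢
    constructor
    · intro hw
      simpa [hga] using hφ g (hw.trans ha.symm)
    · intro hw
      simpa [ha] using hφ g⁻¹ (hw.trans hga.symm)
  rcases hB.subsingleton_or_eq_univ with hsub | huniv
  · exact absurd (hsub rfl h.symm) huv
  · have hfibre : ∀ z, φ z = φ u := fun z => (huniv ▸ Set.mem_univ z : z ∈ φ ⁻¹' {φ u})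
    rw [hfibre x, hfibre y]

theorem IsPreprimitive.eq_univ_of_smul_mem_imp [Finite G] [IsPreprimitive G X] {P : Set X}
    (hP : P.Nonempty) {u v : X} (huv : u ≠ v) (h : ∀ g : G, g • u ∈ P → g • v ∈ P) :
    P = Set.univ := by
  set φ : X → Set G := fun x => {g | g • x ∈ P}
  have hshift : ∀ (k : G) (x : X), φ (k • x) = (· * k) ⁻¹' φ x := fun k x => by
    ext g; simp [φ, mul_smul]
  have hφ : ∀ (g : G) {x y : X}, φ x = φ y → φ (g • x) = φ (g • y) := fun g x y hxy => by
    rw [hshift, hshift, hxy]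
  -- `g ↦ g * k` maps the second set onto the first, so the inclusion `h` is an equality
  have huv' : φ u = φ v := by
    obtain ⟨k, rfl⟩ := exists_smul_eq G v u
    refine Set.eq_of_subset_of_ncard_le (fun g => h g) ?_ (Set.toFinite _)
    rw [hshift, Set.ncard_preimage_of_injective_subset_range (mul_left_injective k)
      fun g _ => ⟨g * k⁻¹, inv_mul_cancel_right g k⟩]
  obtain ⟨p, hp⟩ := hP
  refine Set.eq_univ_of_forall fun w => ?_
  have h1 : (1 : G) ∈ φ p := by simpa [φ] using hp
  rw [← apply_eq_apply_of_ker_invariant hφ huv huv' w p] at h1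
  simpa [φ] using h1

end MulAction

open MulAction

theorem IsPrimitive.isPreprimitive {α : Type*} {G : Subgroup (Equiv.Perm α)} (hG : IsPrimitive G) :
    IsPreprimitive G α where
  toIsPretransitive := hG.1
  isTrivialBlock_of_isBlock hB := hG.2 _ hB

theorem rank_comp_lt_s13 {h q : Ω → Ω} {x y : Ω} (hne : q x ≠ q y) (heq : h (q x) = h (q y)) :
    rank (h ∘ q) < rank q := by
  rw [rank, rank, ← Finset.image_image]
  refine lt_of_le_of_ne Finset.card_image_le fun hcard => hne ?_
  exact Finset.card_image_iff.1 hcard (by simp) (by simp) heq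

namespace Gr

variable {α : Type*} {S : Set (α → α)} {G : Subgroup (Equiv.Perm α)} {h : α → α} {u v : α}

theorem not_adj_of_apply_eq (hh : h ∈ S) (heq : h u = h v) : ¬(Gr S).Adj u v :=
  fun huv => huv.2 h hh heq

theorem adj_apply (hS : ∀ a ∈ S, ∀ b ∈ S, a ∘ b ∈ S) (hh : h ∈ S) (huv : (Gr S).Adj u v) :
    (Gr S).Adj (h u) (h v) :=
  ⟨huv.2 h hh, fun k hk => huv.2 (k ∘ h) (hS k hk h hh)⟩

theorem mapsTo_neighborSet (hS : ∀ a ∈ S, ∀ b ∈ S, a ∘ b ∈ S) (hh : h ∈ S) (u : α) :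
    Set.MapsTo h ((Gr S).neighborSet u) ((Gr S).neighborSet (h u)) :=
  fun _ hv => adj_apply hS hh hv

theorem neighborSet_smul (hS : ∀ a ∈ S, ∀ b ∈ S, a ∘ b ∈ S) (hGS : ∀ g ∈ G, ⇑g ∈ S) (g : G)
    (u : α) : (Gr S).neighborSet (g • u) = (g : Equiv.Perm α) '' (Gr S).neighborSet u := by
  refine Set.Subset.antisymm (fun w hw => ⟨(g : Equiv.Perm α)⁻¹ w, ?_, by simp⟩)
    (mapsTo_neighborSet hS (hGS g g.2) u).image_subset
  simpa [Subgroup.smul_def] using adj_apply hS (hGS _ (inv_mem g.2)) hw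

theorem ncard_neighborSet_eq (hS : ∀ a ∈ S, ∀ b ∈ S, a ∘ b ∈ S) [IsPretransitive G α]
    (hGS : ∀ g ∈ G, ⇑g ∈ S) (u v : α) :
    ((Gr S).neighborSet u).ncard = ((Gr S).neighborSet v).ncard := by
  obtain ⟨g, rfl⟩ := exists_smul_eq G u v
  rw [neighborSet_smul hS hGS, Set.ncard_image_of_injective _ (g : Equiv.Perm α).injective]

theorem image_neighborSet [Finite α] (hS : ∀ a ∈ S, ∀ b ∈ S, a ∘ b ∈ S) [IsPretransitive G α]
    (hGS : ∀ g ∈ G, ⇑g ∈ S) (hh : h ∈ S) (hinj : Set.InjOn h ((Gr S).neighborSet u)) :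
    h '' (Gr S).neighborSet u = (Gr S).neighborSet (h u) := by
  refine Set.eq_of_subset_of_ncard_le (mapsTo_neighborSet hS hh u).image_subset ?_
    (Set.toFinite _)
  rw [hinj.ncard_image, ncard_neighborSet_eq hS hGS]

theorem exists_adj [Fintype α] [DecidableEq α] [Nonempty α] (hS : ∀ a ∈ S, ∀ b ∈ S, a ∘ b ∈ S)
    {f : α → α} (hf : f ∈ S) (hnc : ∀ h ∈ S, ∀ c, ∃ x, h x ≠ c) : ∃ u v, (Gr S).Adj u v := by
  obtain ⟨q, hq, hmin⟩ := Set.exists_min_image S rank (Set.toFinite S) ⟨f, hf⟩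
  obtain ⟨x, hx⟩ := hnc q hq (q (Classical.arbitrary α))
  exact ⟨q x, _, hx, fun h hh heq => (rank_comp_lt_s13 hx heq).not_ge (hmin _ (hS h hh q hq))⟩

theorem not_injOn_neighborSet_union [Fintype α] [DecidableEq α]
    (hS : ∀ a ∈ S, ∀ b ∈ S, a ∘ b ∈ S) [IsPreprimitive G α] (hGS : ∀ g ∈ G, ⇑g ∈ S)
    (hnc : ∀ h ∈ S, ∀ c, ∃ x, h x ≠ c) (hh : h ∈ S) (huv : u ≠ v)
    (heq : h u = h v) : ¬Set.InjOn h ((Gr S).neighborSet u ∪ (Gr S).neighborSet v) := by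
  intro hinj
  have hN : (Gr S).neighborSet u = (Gr S).neighborSet v := by
    rw [← hinj.image_eq_image_iff Set.subset_union_left Set.subset_union_right,
      image_neighborSet hS hGS hh (hinj.mono Set.subset_union_left),
      image_neighborSet hS hGS hh (hinj.mono Set.subset_union_right), heq]
  have : Nonempty α := ⟨u⟩
  obtain ⟨p, q, hpq⟩ := exists_adj hS hh hnc
  have hpq' : q ∈ (Gr S).neighborSet q := by
    rw [← IsPreprimitive.apply_eq_apply_of_ker_invariant (G := G)
      (fun g x y hxy => by rw [neighborSet_smul hS hGS, neighborSet_smul hS hGS, hxy])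
      huv hN p q]
    exact hpq
  exact (Gr S).loopless.irrefl q hpq'

theorem adj_or_adj_of_collapse [Fintype α] [DecidableEq α]
    (hS : ∀ a ∈ S, ∀ b ∈ S, a ∘ b ∈ S) [IsPreprimitive G α] (hGS : ∀ g ∈ G, ⇑g ∈ S)
    (hnc : ∀ h ∈ S, ∀ c, ∃ x, h x ≠ c) {f : α → α} (hf : f ∈ S)
    {a x₁ x₂ y : α} (ha : a ∉ ({x₁, x₂, y} : Set α)) (hfx₁ : f x₁ = a) (hfx₂ : f x₂ = a)
    (hfix : ∀ z ∉ ({x₁, x₂, y} : Set α), f z = z) : (Gr S).Adj a y ∨ (Gr S).Adj x₂ y := by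
  by_contra! hy
  have hfa : f a = a := hfix a ha
  have hcollapsed : ∀ z, f z = a → z ∉ (Gr S).neighborSet a ∪ (Gr S).neighborSet x₂ := by
    rintro z hz (hadj | hadj)
    exacts [not_adj_of_apply_eq hf (hfa.trans hz.symm) hadj,
      not_adj_of_apply_eq hf (hfx₂.trans hz.symm) hadj]
  refine not_injOn_neighborSet_union hS hGS hnc hf (u := a) (fun h => ha (by simp [h]))
    (hfa.trans hfx₂.symm) ((Set.injOn_id _).congr fun z hz => (hfix z fun hzT => ?_).symm)
  rcases hzT with rfl | rfl | rfl
  exacts [hcollapsed _ hfx₁ hz, hcollapsed _ hfx₂ hz, hz.elim hy.1 hy.2]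

end Gr

def IsLargestFibre {α : Type*} (S : Set (α → α)) (U : Set α) : Prop :=
  (∃ k ∈ S, ∃ c, U = k ⁻¹' {c}) ∧ ∀ k ∈ S, ∀ c, (k ⁻¹' {c}).ncard ≤ U.ncard

theorem exists_isLargestFibre {α : Type*} [Finite α] [Nonempty α] {S : Set (α → α)}
    (hS : S.Nonempty) : ∃ U, IsLargestFibre S U := by
  obtain ⟨⟨k, c⟩, ⟨hk, -⟩, hmax⟩ := Set.exists_max_image (S ×ˢ Set.univ)
    (fun p : (α → α) × α => (p.1 ⁻¹' {p.2}).ncard) (Set.toFinite _) (hS.prod Set.univ_nonempty)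
  exact ⟨k ⁻¹' {c}, ⟨k, hk, c, rfl⟩, fun k' hk' c' => hmax (k', c') ⟨hk', trivial⟩⟩

namespace IsLargestFibre

section

variable {α : Type*} {S : Set (α → α)} {U : Set α}

theorem ncard_preimage_le (hS : ∀ a ∈ S, ∀ b ∈ S, a ∘ b ∈ S) (hU : IsLargestFibre S U)
    {f : α → α} (hf : f ∈ S) : (f ⁻¹' U).ncard ≤ U.ncard := by
  obtain ⟨⟨k, hk, c, rfl⟩, hmax⟩ := hU
  exact hmax (k ∘ f) (hS k hk f hf) c

theorem preimage_perm (hS : ∀ a ∈ S, ∀ b ∈ S, a ∘ b ∈ S) (hU : IsLargestFibre S U)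
    {g : Equiv.Perm α} (hg : ⇑g ∈ S) : IsLargestFibre S (g ⁻¹' U) := by
  obtain ⟨⟨k, hk, c, rfl⟩, hmax⟩ := hU
  refine ⟨⟨k ∘ g, hS k hk g hg, c, rfl⟩, fun k' hk' c' => ?_⟩
  rw [Set.ncard_preimage_of_injective_subset_range g.injective (by simp)]
  exact hmax k' hk' c'

theorem nonempty [Finite α] [Nonempty α] (hU : IsLargestFibre S U) : U.Nonempty := by
  obtain ⟨⟨k, hk, -, -⟩, hmax⟩ := hU
  have x := Classical.arbitrary α
  have hpos : 0 < (k ⁻¹' {k x}).ncard := (Set.ncard_pos (Set.toFinite _)).2 ⟨x, rfl⟩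
  exact Set.nonempty_of_ncard_ne_zero (hpos.trans_le (hmax k hk (k x))).ne'

theorem ne_univ (hU : IsLargestFibre S U) (hnc : ∀ h ∈ S, ∀ c, ∃ x, h x ≠ c) :
    U ≠ Set.univ := by
  obtain ⟨⟨k, hk, c, rfl⟩, -⟩ := hU
  intro huniv
  obtain ⟨x, hx⟩ := hnc k hk c
  exact hx (huniv ▸ Set.mem_univ x : x ∈ k ⁻¹' {c})

theorem ncard_preimage_inter_le [Finite α] (hS : ∀ a ∈ S, ∀ b ∈ S, a ∘ b ∈ S)
    (hU : IsLargestFibre S U) {f : α → α} (hf : f ∈ S) {T : Set α} (hfix : ∀ z ∉ T, f z = z) :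
    (f ⁻¹' U ∩ T).ncard ≤ (U ∩ T).ncard := by
  have hdiff : f ⁻¹' U \ T = U \ T := by
    ext z
    by_cases hz : z ∈ T <;> simp [hz, hfix]
  have hf' := Set.ncard_inter_add_ncard_sdiff_eq_ncard (f ⁻¹' U) T
  have hU' := Set.ncard_inter_add_ncard_sdiff_eq_ncard U T
  rw [hdiff] at hf'
  have := hU.ncard_preimage_le hS hf
  omega

end

variable {α : Type*} {S : Set (α → α)} {U : Set α}

theorem not_adj (hU : IsLargestFibre S U) {u v : α} (hu : u ∈ U) (hv : v ∈ U) :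
    ¬(Gr S).Adj u v := by
  obtain ⟨⟨k, hk, c, rfl⟩, -⟩ := hU
  exact Gr.not_adj_of_apply_eq hk (hu.trans hv.symm)

/-- Counting: `f⁻¹' U` agrees with `U` off `{x₁, x₂, y}` and is no larger, yet contains `x₁`
and `x₂`; so `U` meets `{x₁, x₂, y}` twice, and `x₁ ∉ U` would put the edge at `y` inside `U`. -/
theorem mem_of_apply_mem [Finite α] (hS : ∀ a ∈ S, ∀ b ∈ S, a ∘ b ∈ S)
    (hU : IsLargestFibre S U) {f : α → α} (hf : f ∈ S) {a x₁ x₂ y : α} (hx : x₁ ≠ x₂)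
    (hfx₁ : f x₁ = a) (hfx₂ : f x₂ = a)
    (hfix : ∀ z ∉ ({x₁, x₂, y} : Set α), f z = z) (hy : (Gr S).Adj a y ∨ (Gr S).Adj x₂ y)
    (ha : a ∈ U) : x₁ ∈ U := by
  by_contra hx₁
  have h2 : 2 ≤ (U ∩ {x₁, x₂, y}).ncard :=
    calc 2 = ({x₁, x₂} : Set α).ncard := (Set.ncard_pair hx).symm
      _ ≤ (f ⁻¹' U ∩ {x₁, x₂, y}).ncard :=
        Set.ncard_le_ncard (by simp [Set.insert_subset_iff, hfx₁, hfx₂, ha])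
      _ ≤ (U ∩ {x₁, x₂, y}).ncard := hU.ncard_preimage_inter_le hS hf hfix
  have hsub : U ∩ {x₁, x₂, y} ⊆ {x₂, y} := by
    rintro z ⟨hzU, rfl | hz⟩
    exacts [absurd hzU hx₁, hz]
  have hpair : U ∩ {x₁, x₂, y} = {x₂, y} :=
    Set.eq_of_subset_of_ncard_le hsub ((Set.ncard_insert_le _ _).trans (by simpa using h2))
  have hx₂ : x₂ ∈ U := (hpair.superset (by simp)).1
  have hyU : y ∈ U := (hpair.superset (by simp)).1
  exact hy.elim (hU.not_adj ha hyU) (hU.not_adj hx₂ hyU)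

end IsLargestFibre

theorem KernelType32.exists_fibre_of_idempotent {α : Type*} [DecidableEq α] {f : α → α}
    (hidem : f ∘ f = f) (hker : KernelType32 f) :
    ∃ A : Finset α, A.card = 3 ∧ ∃ a ∈ A, (∀ z ∈ A, f z = a) ∧
      ∃ y ≠ a, ∀ z ∉ A, f z ≠ z → z = y := by
  obtain ⟨A, B, hA, hB, hfA, hfB, hcol⟩ := hker
  have hidem' : ∀ z, f (f z) = f z := congrFun hidem
  have hmoved : ∀ z, f z ≠ z → (z ∈ A ∧ f z ∈ A) ∨ (z ∈ B ∧ f z ∈ B) := fun z hz =>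
    (hcol z (f z) (hidem' z).symm).resolve_left (Ne.symm hz)
  obtain ⟨x, hx⟩ : A.Nonempty := Finset.card_pos.1 (by omega)
  have hfibre : ∀ z, f z = f x → z ∈ A := fun z hz => by
    by_contra hzA
    have hAB : A ⊆ B := fun w hw => by
      rcases hcol z w (hz.trans (hfA x hx w hw)) with rfl | h | h
      exacts [absurd hw hzA, absurd h.1 hzA, h.2]
    have := Finset.card_le_card hAB
    omega
  have haA : f x ∈ A := hfibre _ (hidem' x)
  refine ⟨A, hA, f x, haA, fun z hz => hfA z hz x hx, ?_⟩
  -- two moved points `z ≠ y` outside `A` would give three points `z, y, f z` of `B`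
  by_cases h : ∃ y ∉ A, f y ≠ y
  · obtain ⟨y, hyA, hy⟩ := h
    refine ⟨y, fun h => hyA (h ▸ haA), fun z hzA hz => ?_⟩
    by_contra hzy
    have hzB := (hmoved z hz).resolve_left (hzA ·.1)
    have hyB := (hmoved y hy).resolve_left (hyA ·.1)
    have hfzy : f z = f y := hfB z hzB.1 y hyB.1
    have h3 : ({z, y, f z} : Finset α).card = 3 :=
      Finset.card_eq_three.2 ⟨z, y, f z, hzy, hz.symm, hfzy ▸ hy.symm, rfl⟩
    have := Finset.card_le_card
      (show {z, y, f z} ⊆ B by simp [Finset.insert_subset_iff, hzB, hyB])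
    omega
  · push Not at h
    obtain ⟨y, -, hy⟩ := Finset.exists_mem_ne (by omega : 1 < A.card) (f x)
    exact ⟨y, hy, fun z hzA hz => absurd (h z hzA) hz⟩

theorem KernelType32.exists_collapse {α : Type*} [DecidableEq α] {f : α → α}
    (hidem : f ∘ f = f) (hker : KernelType32 f) :
    ∃ a x₁ x₂ y : α, x₁ ≠ x₂ ∧ a ∉ ({x₁, x₂, y} : Set α) ∧ f x₁ = a ∧ f x₂ = a ∧
      ∀ z ∉ ({x₁, x₂, y} : Set α), f z = z := by
  obtain ⟨A, hA, a, haA, hfA, y, hya, hy⟩ := exists_fibre_of_idempotent hidem hker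
  obtain ⟨x₁, x₂, hx₁₂, hA'⟩ := Finset.card_eq_two.1
    (show (A.erase a).card = 2 by rw [Finset.card_erase_of_mem haA, hA])
  have hax : a ≠ x₁ ∧ a ≠ x₂ := by
    constructor <;> exact (Finset.ne_of_mem_erase (s := A) (by simp [hA'])).symm
  have hA'' : A = {a, x₁, x₂} := by rw [← Finset.insert_erase haA, hA']
  simp only [hA'', Finset.mem_insert, Finset.mem_singleton, forall_eq_or_imp,
    forall_eq] at hfA hy
  refine ⟨a, x₁, x₂, y, hx₁₂, by simp [hax, hya.symm], hfA.2.1, hfA.2.2, fun z hz => ?_⟩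
  by_contra hz'
  by_cases hzA : z = a ∨ z = x₁ ∨ z = x₂
  · rcases hzA with rfl | rfl | rfl
    exacts [hz' hfA.1, hz (by simp), hz (by simp)]
  · exact hz (by simp [hy z hzA hz'])

theorem stmt13_general (G : Subgroup (Equiv.Perm Ω))
    (hG : IsPrimitive G) (f : Ω → Ω) (hidem : f ∘ f = f) (hker : KernelType32 f) :
    Synchronizes G f := by
  have := hG.isPreprimitive
  obtain ⟨a, x₁, x₂, y, hx, ha, hfx₁, hfx₂, hfix⟩ := hker.exists_collapse hidem
  have : Nonempty Ω := ⟨a⟩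
  set S : Set (Ω → Ω) := (genSemigroup G f : Set (Function.End Ω))
  by_contra hsync
  have hnc : ∀ h ∈ S, ∀ c, ∃ x, h x ≠ c := fun h hh c => by
    by_contra! hc
    exact hsync ⟨h, hh, c, hc⟩
  have hS : ∀ a ∈ S, ∀ b ∈ S, a ∘ b ∈ S := fun a ha b hb =>
    (genSemigroup G f).mul_mem (x := a) (y := b) ha hb
  have hf : f ∈ S :=
    Subsemigroup.subset_closure (M := Function.End Ω) (Set.mem_union_right _ rfl)
  have hGS : ∀ g ∈ G, ⇑g ∈ S := fun g hg =>
    Subsemigroup.subset_closure (M := Function.End Ω) (Set.mem_union_left _ ⟨g, hg, rfl⟩)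
  have hy := Gr.adj_or_adj_of_collapse hS hGS hnc hf ha hfx₁ hfx₂ hfix
  obtain ⟨P, hP⟩ := exists_isLargestFibre ⟨f, hf⟩
  refine hP.ne_univ hnc (IsPreprimitive.eq_univ_of_smul_mem_imp (G := G) (u := a) (v := x₁)
    hP.nonempty (fun h => ha (by simp [h])) fun g hg => ?_)
  exact (hP.preimage_perm hS (hGS g g.2)).mem_of_apply_mem hS hf hx hfx₁ hfx₂ hfix hy hg

theorem stmt13 (hn : 2 < Fintype.card Ω) (G : Subgroup (Equiv.Perm Ω))
    (hG : IsPrimitive G) (f : Ω → Ω) (hidem : f ∘ f = f) (hker : KernelType32 f) :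
    Synchronizes G f :=
  stmt13_general G hG f hidem hker
end

section
/- Let f be a transformation of a finite set Ω and G a group of permutations of Ω. If there exists g ∈ G with rank(f g f) = rank(f), then the semigroup ⟨G,f⟩ contains an idempotent e with the same kernel as f. -/
open Finset

variable {Ω : Type*} [Fintype Ω] [DecidableEq Ω]

/-! Put `a = g ∘ f`. Since `rank (a ∘ a) = rank (f ∘ g ∘ f) = rank f = rank a`, the map `a` sends its
image onto itself, so every power `a ^ (n + 1)` has the same image as `a`. As `Function.End Ω` is
finite, some such power is idempotent. It factors as `(a ^ n ∘ g) ∘ f`, so its kernel contains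
that of `f`, and having the same rank as `f` it has the same kernel. -/

instance Function.End.finite {α : Type*} [Finite α] : Finite (Function.End α) :=
  inferInstanceAs (Finite (α → α))

theorem exists_isIdempotentElem_pow_succ {M : Type*} [Monoid M] [Finite M] (a : M) :
    ∃ n, IsIdempotentElem (a ^ (n + 1)) := by
  obtain ⟨i, j, hij, hpow⟩ := Finite.exists_ne_map_eq_of_infinite (a ^ · : ℕ → M)
  wlog hlt : i < j generalizing i j
  · exact this j i hij.symm hpow.symm (by omega)
  obtain ⟨k, rfl⟩ := Nat.exists_eq_add_of_lt hlt
  have hperiod : ∀ q r, a ^ (i + q * (k + 1) + r) = a ^ (i + r) := by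
    intro q
    induction q with
    | zero => simp
    | succ q ih =>
      intro r
      rw [show i + (q + 1) * (k + 1) + r = i + k + 1 + (q * (k + 1) + r) by ring, pow_add,
        ← hpow, ← pow_add, ← add_assoc, ih]
  -- `N = (i + 1) * (k + 1)` is at least the threshold `i` and a multiple of the period `k + 1`.
  refine ⟨k * i + k + i, ?_⟩
  rw [IsIdempotentElem, ← pow_add]
  convert hperiod (i + 1) (k * i + k + 1) using 2 <;> ring

theorem Subsemigroup.pow_succ_mem {M : Type*} [Monoid M] (S : Subsemigroup M) {a : M}
    (ha : a ∈ S) (n : ℕ) : a ^ (n + 1) ∈ S := by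
  induction n with
  | zero => simpa using ha
  | succ n ih => rw [pow_succ]; exact S.mul_mem ih ha

theorem Function.range_iterate_succ_of_range_comp_self {α : Type*} {a : α → α}
    (h : Set.range (a ∘ a) = Set.range a) (n : ℕ) : Set.range a^[n + 1] = Set.range a := by
  induction n with
  | zero => rfl
  | succ n ih => rw [Function.iterate_succ', Set.range_comp, ih, ← Set.range_comp, h]

theorem Function.comp_apply_eq_iff_of_ncard_range_comp {α β γ : Type*} [Finite α]
    {φ : β → γ} {f : α → β} (h : (Set.range (φ ∘ f)).ncard = (Set.range f).ncard) (x y : α) :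
    φ (f x) = φ (f y) ↔ f x = f y := by
  rw [Set.range_comp] at h
  exact (Set.injOn_of_ncard_image_eq h).eq_iff (Set.mem_range_self x) (Set.mem_range_self y)

theorem rank_eq_ncard_range (f : Ω → Ω) : rank f = (Set.range f).ncard := by
  rw [rank, ← Set.ncard_coe_finset, Finset.coe_image, Finset.coe_univ, Set.image_univ]

theorem rank_comp_of_injective {g : Ω → Ω} (hg : Function.Injective g) (f : Ω → Ω) :
    rank (g ∘ f) = rank f := by
  rw [rank, ← Finset.image_image, Finset.card_image_of_injective _ hg, rank]

theorem stmt14 (G : Subgroup (Equiv.Perm Ω)) (f : Ω → Ω) (g : Equiv.Perm Ω)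
    (hg : g ∈ G) (hrk : rank (fun x : Ω => f (g (f x))) = rank f) :
    ∃ e ∈ genSemigroup G f, e * e = e ∧ ∀ x y : Ω, e x = e y ↔ f x = f y := by
  set a : Function.End Ω := (g ∘ f : Ω → Ω)
  have ha_mem : a ∈ genSemigroup G f :=
    Subsemigroup.mul_mem _ (Subsemigroup.subset_closure (.inl ⟨g, hg, rfl⟩))
      (Subsemigroup.subset_closure (.inr rfl))
  have hrank_a : rank a = rank f := rank_comp_of_injective g.injective f
  have hrange : Set.range (a ∘ a) = Set.range a := by
    refine Set.eq_of_subset_of_ncard_le (Set.range_comp_subset_range a a) (le_of_eq ?_)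
    rw [← rank_eq_ncard_range, ← rank_eq_ncard_range, hrank_a]
    exact ((rank_comp_of_injective g.injective _).trans hrk).symm
  obtain ⟨n, hidem⟩ := exists_isIdempotentElem_pow_succ a
  refine ⟨a ^ (n + 1), (genSemigroup G f).pow_succ_mem ha_mem n, hidem, fun x y => ?_⟩
  refine Function.comp_apply_eq_iff_of_ncard_range_comp (φ := a^[n] ∘ g) ?_ x y
  rw [← rank_eq_ncard_range, ← rank_eq_ncard_range, ← hrank_a]
  change rank a^[n + 1] = rank a
  rw [rank_eq_ncard_range, rank_eq_ncard_range,
    Function.range_iterate_succ_of_range_comp_self hrange n]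
end

section
/- Let S be a transformation semigroup on a finite set Ω of size n containing a primitive group G, and suppose the minimum rank of an element of S is r with r > 1. Then S contains no element whose kernel partition has exactly r−1 parts of size n/r together with at least two further parts (i.e., rank > r but with r−1 kernel classes of size n/r). -/
open Finset

variable {Ω : Type*} [Fintype Ω] [DecidableEq Ω]

/-!
By Neumann's lemma (the image of an element of minimal rank `r` meets every `G`-translate of
each of its kernel classes exactly once), all kernel classes of such an element have size `n / r`.
Let `h` be as in the statement and `c₁ ≠ c₂` two image points of `h` outside its `r - 1`
classes of size `n / r`. For `f` of rank `r` and `g ∈ G`, the map `f ∘ g ∘ h` has rank `r`, so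
its classes have size `n / r` too; hence every class of `h` of that size is a whole class of
`f ∘ g ∘ h`, and if `f ∘ g` separated `c₁` and `c₂`, then `f ∘ g ∘ h` would have rank `r + 1`.
So `f (g c₁) = f (g c₂)` for all `g ∈ G`. The points `y` with `f (g y) = f (g c₁)` for all
`g ∈ G` form a block containing `c₁` and `c₂`, so by primitivity `f` is constant,
contradicting `r > 1`.
-/

open MulAction

section Neumann
variable {G X : Type*} [Group G] [MulAction G X] [Fintype G] [DecidableEq X] [IsPretransitive G X]

lemma card_filter_smul_eq_eq_card_filter_smul_eq_self (a b : X) :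
    #{g : G | g • a = b} = #{g : G | g • a = a} := by
  obtain ⟨k, rfl⟩ := exists_smul_eq G a b
  refine (card_nbij' (k * ·) (k⁻¹ * ·) ?_ ?_ ?_ ?_).symm <;> intro g hg
  · simp_all [mul_smul]
  · simp_all [mul_smul]
  · simp
  · simp

variable [Fintype X]

lemma card_filter_smul_mem_mul_card (a : X) (B : Finset X) :
    #{g : G | g • a ∈ B} * Fintype.card X = #B * Fintype.card G := by
  have hfibres (C : Finset X) : #{g : G | g • a ∈ C} = #C * #{g : G | g • a = a} := by
    rw [← sum_card_fiberwise_eq_card_filter, sum_congr rfl fun b _ ↦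
      card_filter_smul_eq_eq_card_filter_smul_eq_self a b, sum_const, smul_eq_mul]
  have hG : Fintype.card G = Fintype.card X * #{g : G | g • a = a} := by
    simpa using hfibres univ
  rw [hfibres, hG]
  ring

/-- Neumann's separation lemma. -/
theorem card_mul_card_eq_card_of_card_filter_smul_mem_eq_one (A B : Finset X)
    (hAB : ∀ g : G, #{a ∈ A | g • a ∈ B} = 1) : #A * #B = Fintype.card X := by
  have hsum : ∑ g : G, #{a ∈ A | g • a ∈ B} = ∑ a ∈ A, #{g : G | g • a ∈ B} := by
    simp only [card_filter]
    exact sum_comm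
  have key : Fintype.card G * Fintype.card X = #A * #B * Fintype.card G := by
    calc Fintype.card G * Fintype.card X
        = (∑ a ∈ A, #{g : G | g • a ∈ B}) * Fintype.card X := by simp [← hsum, hAB]
      _ = ∑ a ∈ A, #B * Fintype.card G := by
          rw [sum_mul]; exact sum_congr rfl fun a _ ↦ card_filter_smul_mem_mul_card a B
      _ = #A * #B * Fintype.card G := by rw [sum_const, smul_eq_mul, mul_assoc]
  exact (Nat.eq_of_mul_eq_mul_left Fintype.card_pos (key.trans (mul_comm _ _))).symm

end Neumann

lemma isBlock_setOf_forall_apply_smul_eq {G X β : Type*} [Group G] [MulAction G X]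
    (φ : X → β) (x : X) : IsBlock G {y | ∀ g : G, φ (g • y) = φ (g • x)} := by
  rw [isBlock_iff_smul_eq_of_mem]
  intro σ a (ha : ∀ g : G, φ (g • a) = φ (g • x)) (hσa : ∀ g : G, φ (g • σ • a) = φ (g • x))
  have hσx (g : G) : φ ((g * σ) • x) = φ (g • x) := by rw [← ha, mul_smul, hσa]
  ext z
  rw [Set.mem_smul_set_iff_inv_smul_mem]
  show (∀ g : G, φ (g • σ⁻¹ • z) = φ (g • x)) ↔ ∀ g : G, φ (g • z) = φ (g • x)
  refine ⟨fun hz g ↦ ?_, fun hz g ↦ ?_⟩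
  · rw [← hσx, ← hz, ← mul_smul, mul_inv_cancel_right]
  · rw [← mul_smul, hz, ← hσx, inv_mul_cancel_right]

lemma apply_eq_of_isPrimitive {α β : Type*} {G : Subgroup (Equiv.Perm α)} (hG : IsPrimitive G)
    {φ : α → β} {c₁ c₂ : α} (hne : c₁ ≠ c₂) (hφ : ∀ g ∈ G, φ (g c₁) = φ (g c₂)) (y : α) :
    φ y = φ c₁ := by
  rcases hG.2 _ (isBlock_setOf_forall_apply_smul_eq φ c₁) with hsub | huniv
  · exact absurd (hsub (fun _ ↦ rfl) fun g ↦ (hφ g g.2).symm) hne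
  · have hy : y ∈ {y | ∀ g : G, φ (g • y) = φ (g • c₁)} := huniv ▸ Set.mem_univ y
    simpa using hy 1

lemma card_filter_apply_eq_eq_one {α β : Type*} [DecidableEq β] {φ : α → β} {s : Finset α}
    {t : Finset β} (hφ : Set.BijOn φ s t) {c : β} (hc : c ∈ t) : #{a ∈ s | φ a = c} = 1 := by
  obtain ⟨a, ha, rfl⟩ := hφ.surjOn hc
  refine card_eq_one.mpr ⟨a, ext fun b ↦ ?_⟩
  simp only [mem_filter, mem_singleton]
  exact ⟨fun ⟨hb, hba⟩ ↦ hφ.injOn hb ha hba, by rintro rfl; exact ⟨ha, rfl⟩⟩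

lemma rank_comp_le (f g : Ω → Ω) : rank (f ∘ g) ≤ rank f := by
  rw [rank, rank, ← image_image]
  exact card_le_card (image_subset_image (subset_univ _))

lemma bijOn_comp_image_of_rank_le {f k : Ω → Ω} (h : rank f ≤ rank (f ∘ k ∘ f)) :
    Set.BijOn (f ∘ k) (univ.image f : Set Ω) (univ.image f) := by
  have hmaps : Set.MapsTo (f ∘ k) (univ.image f : Set Ω) (univ.image f) :=
    fun a _ ↦ mem_coe.mpr (mem_image_of_mem f (mem_univ (k a)))
  refine ((univ.image f).finite_toSet.injOn_iff_bijOn_of_mapsTo hmaps).mp ?_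
  refine card_image_iff.mp (le_antisymm card_image_le ?_)
  rwa [image_image]

theorem rank_mul_card_fibre_eq_card {S : Set (Ω → Ω)} (hS : ∀ f ∈ S, ∀ g ∈ S, g ∘ f ∈ S)
    {G : Subgroup (Equiv.Perm Ω)} [IsPretransitive G Ω] (hGS : ∀ g ∈ G, ⇑g ∈ S)
    {f : Ω → Ω} (hf : f ∈ S) (hmin : ∀ k ∈ S, rank f ≤ rank k) (x : Ω) :
    rank f * #{y | f y = f x} = Fintype.card Ω := by
  classical
  refine card_mul_card_eq_card_of_card_filter_smul_mem_eq_one (G := G) _ _ fun g ↦ ?_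
  have hbij := bijOn_comp_image_of_rank_le (hmin _ (hS _ (hS _ hf _ (hGS g g.2)) _ hf))
  simpa [Subgroup.smul_def, Equiv.Perm.smul_def] using
    card_filter_apply_eq_eq_one hbij (mem_image_of_mem f (mem_univ x))

lemma apply_eq_of_card_fibre_comp_le {h m : Ω → Ω} {y w : Ω}
    (hfib : #{x | m (h x) = m (h y)} ≤ #{x | h x = h y}) (hw : m (h w) = m (h y)) :
    h w = h y := by
  have hsub : ({x | h x = h y} : Finset Ω) ⊆ ({x | m (h x) = m (h y)} : Finset Ω) := by
    intro x hx
    simp only [mem_filter, mem_univ, true_and] at hx ⊢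
    rw [hx]
  have hw' : w ∈ ({x | m (h x) = m (h y)} : Finset Ω) := by simpa using hw
  rw [← eq_of_subset_of_card_le hsub hfib] at hw'
  simpa using hw'

lemma apply_eq_apply_of_notMem_of_card_eq_pred {S : Set (Ω → Ω)}
    (hS : ∀ f ∈ S, ∀ g ∈ S, g ∘ f ∈ S) {G : Subgroup (Equiv.Perm Ω)} [IsPretransitive G Ω]
    (hGS : ∀ g ∈ G, ⇑g ∈ S) {r : ℕ} (hmin : ∀ k ∈ S, r ≤ rank k) {h m : Ω → Ω} (hh : h ∈ S)
    (hm : m ∈ S) (hmr : rank m = r) {D : Finset Ω} (hD : D ⊆ univ.image h)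
    (hDfib : ∀ v ∈ D, #{x | h x = v} = Fintype.card Ω / r) (hDcard : #D = r - 1) {c₁ c₂ : Ω}
    (hc₁ : c₁ ∈ univ.image h \ D) (hc₂ : c₂ ∈ univ.image h \ D) : m c₁ = m c₂ := by
  by_contra hne
  obtain ⟨hc₁h, hc₁D⟩ := mem_sdiff.mp hc₁
  obtain ⟨hc₂h, hc₂D⟩ := mem_sdiff.mp hc₂
  have hmh : rank (m ∘ h) = r := le_antisymm (hmr ▸ rank_comp_le m h) (hmin _ (hS _ hh _ hm))
  have hr : 0 < r := by
    obtain ⟨y, -, -⟩ := mem_image.mp hc₁h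
    exact hmh ▸ card_pos.mpr ⟨_, mem_image_of_mem (m ∘ h) (mem_univ y)⟩
  have hfib (y : Ω) : #{x | m (h x) = m (h y)} = Fintype.card Ω / r := by
    rw [← rank_mul_card_fibre_eq_card hS hGS (hS _ hh _ hm) (hmh ▸ hmin) y, hmh,
      Nat.mul_div_cancel_left _ hr]
    rfl
  have hsep : ∀ v ∈ D, ∀ w ∈ univ.image h, m w = m v → w = v := by
    intro v hv w hw hmw
    obtain ⟨y, -, rfl⟩ := mem_image.mp (hD hv)
    obtain ⟨z, -, rfl⟩ := mem_image.mp hw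
    exact apply_eq_of_card_fibre_comp_le (by rw [hfib, hDfib _ hv]) hmw
  have hsepD : ∀ w ∈ univ.image h, w ∉ D → m w ∉ m '' D := by
    rintro w hw hwD ⟨v, hv, hmv⟩
    exact hwD (hsep v hv w hw hmv.symm ▸ hv)
  have hinj : Set.InjOn m ↑(insert c₁ (insert c₂ D)) := by
    have hc₁c₂D : c₁ ∉ insert c₂ (D : Set Ω) := by
      rintro (rfl | h₁); exacts [hne rfl, hc₁D h₁]
    rw [coe_insert, coe_insert, Set.injOn_insert hc₁c₂D, Set.injOn_insert hc₂D]
    refine ⟨⟨fun v hv w hw hvw ↦ (hsep v hv w (hD hw) hvw.symm).symm, hsepD c₂ hc₂h hc₂D⟩, ?_⟩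
    rintro ⟨v, rfl | hv, hmv⟩
    exacts [hne hmv.symm, hsepD c₁ hc₁h hc₁D ⟨v, hv, hmv⟩]
  have hcard : #(insert c₁ (insert c₂ D)) ≤ rank (m ∘ h) := by
    rw [← card_image_of_injOn hinj, rank, ← image_image]
    exact card_le_card (image_subset_image (insert_subset hc₁h (insert_subset hc₂h hD)))
  have hc₁c₂ : c₁ ≠ c₂ := fun h₁₂ ↦ hne (congrArg m h₁₂)
  rw [card_insert_of_notMem (by simp [hc₁D, hc₁c₂]), card_insert_of_notMem hc₂D] at hcard
  omega

theorem stmt15 (S : Set (Ω → Ω)) (hS : ∀ f ∈ S, ∀ g ∈ S, (g ∘ f) ∈ S)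
    (G : Subgroup (Equiv.Perm Ω)) (hGS : ∀ g : Equiv.Perm Ω, g ∈ G → ⇑g ∈ S)
    (hG : IsPrimitive G) (r : ℕ) (hr1 : 1 < r)
    (hr : ∃ f ∈ S, rank f = r) (hmin : ∀ f ∈ S, r ≤ rank f) :
    ¬ ∃ h ∈ S, r < rank h ∧
      ((Finset.univ.image h).filter
        (fun v => (Finset.univ.filter (fun x => h x = v)).card = Fintype.card Ω / r)).card
        = r - 1 := by
  rintro ⟨h, hh, hrh, hD⟩
  obtain ⟨f, hf, hfr⟩ := hr
  have : IsPretransitive G Ω := hG.1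
  set D := (univ.image h).filter fun v ↦ #{x | h x = v} = Fintype.card Ω / r
  obtain ⟨c₁, hc₁, c₂, hc₂, hne⟩ := one_lt_card.mp <| show 1 < #(univ.image h \ D) by
    rw [card_sdiff_of_subset (filter_subset _ _)]
    exact Nat.lt_sub_of_add_lt (by rw [hD]; unfold rank at hrh; omega)
  have hcollapse (g : Equiv.Perm Ω) (hg : g ∈ G) : f (g c₁) = f (g c₂) :=
    apply_eq_apply_of_notMem_of_card_eq_pred hS hGS hmin hh (hS _ (hGS g hg) _ hf)
      (le_antisymm (hfr ▸ rank_comp_le f g) (hmin _ (hS _ (hGS g hg) _ hf)))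
      (filter_subset _ _) (fun v hv ↦ (mem_filter.mp hv).2) hD hc₁ hc₂
  have hconst := apply_eq_of_isPrimitive hG hne hcollapse
  have : rank f ≤ 1 := card_le_one.mpr <| by
    simp only [mem_image, mem_univ, true_and]
    rintro _ ⟨y, rfl⟩ _ ⟨z, rfl⟩
    rw [hconst y, hconst z]
  omega
end

section
/- Let G be a primitive permutation group of degree n > 2. Then G synchronizes every map of rank 2. -/
open Finset

variable {Ω : Type*} [Fintype Ω] [DecidableEq Ω]

/-! Let the image of `f` be `{c, d}`. If some `g ∈ G` has `f (g c) = f (g d)`, then `f ∘ g ∘ f` is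
constant. Otherwise `f` properly 2-colours the orbital graph of `{c, d}`, and so does `f ∘ g` for
every `g ∈ G`. Primitivity makes this graph connected, so its 2-colouring is unique up to swapping
the colours: the kernel of `f` is a `G`-invariant equivalence relation. Primitivity makes it
trivial, so `f` is injective, which is impossible for a map of rank `2 < n`. -/

open scoped Pointwise

theorem eq_iff_eq_iff_of_eq_or_eq {α : Type*} {c d u v u' v' : α} (hu : u = c ∨ u = d)
    (hv : v = c ∨ v = d) (hu' : u' = c ∨ u' = d) (hv' : v' = c ∨ v' = d) :
    (u' = u ↔ v' = v) ↔ (u = v ↔ u' = v') := by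
  grind

namespace IsPrimitive

variable {α : Type*} {G : Subgroup (Equiv.Perm α)}

theorem eqvGen_of_invariant (hG : IsPrimitive G) {r : α → α → Prop}
    (hr : ∀ g ∈ G, ∀ x y, r x y → r (g x) (g y)) {a b : α} (hab : r a b) (hne : a ≠ b)
    (x y : α) : Relation.EqvGen r x y := by
  have hinv : ∀ g ∈ G, ∀ x y, Relation.EqvGen r x y → Relation.EqvGen r (g x) (g y) := by
    intro g hg x y hxy
    induction hxy with
    | rel x y h => exact .rel _ _ (hr g hg x y h)
    | refl x => exact .refl _
    | symm x y _ ih => exact .symm _ _ ih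
    | trans x y z _ _ ih₁ ih₂ => exact .trans _ _ _ ih₁ ih₂
  set B : Set α := {y | Relation.EqvGen r a y}
  have hsub : ∀ g : G, ∀ z ∈ B, g • z ∈ B → g • B ⊆ B := by
    rintro g z hz hgz _ ⟨w, hw, rfl⟩
    have hg := hinv g g.2
    exact .trans _ _ _ hgz (.trans _ _ _ (.symm _ _ (hg _ _ hz)) (hg _ _ hw))
  have hB : MulAction.IsBlock G B := by
    refine MulAction.isBlock_iff_smul_eq_of_mem.mpr fun g z hz hgz => ?_
    refine (hsub g z hz hgz).antisymm (Set.subset_smul_set_iff.mpr (hsub g⁻¹ (g • z) hgz ?_))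
    simpa using hz
  have hB_univ : B = Set.univ := (hG.2 B hB).resolve_left fun h =>
    hne (h (Relation.EqvGen.refl a) (Relation.EqvGen.rel _ _ hab))
  have hx : x ∈ B := hB_univ ▸ Set.mem_univ x
  have hy : y ∈ B := hB_univ ▸ Set.mem_univ y
  exact .trans _ _ _ (.symm _ _ hx) hy

theorem eq_of_invariant (hG : IsPrimitive G) {r : α → α → Prop}
    (hr : ∀ g ∈ G, ∀ x y, r x y → r (g x) (g y)) {a b : α} (hab : r a b) (hne : a ≠ b)
    {β : Type*} {φ : α → β} (hφ : ∀ x y, r x y → φ x = φ y) (x y : α) : φ x = φ y :=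
  (Setoid.ker φ).iseqv.eqvGen_iff.mp
    (Relation.EqvGen.mono hφ _ _ (hG.eqvGen_of_invariant hr hab hne x y))

theorem injective_of_forall_apply_ne (hG : IsPrimitive G) {f : α → α} {c d : α}
    (hf : ∀ x, f x = c ∨ f x = d) {a b : α} (hsep : ∀ g ∈ G, f (g a) ≠ f (g b)) :
    Function.Injective f := by
  have hab : a ≠ b := fun h => hsep 1 G.one_mem (by rw [h])
  set r : α → α → Prop := fun x y => ∃ h ∈ G, h a = x ∧ h b = y
  have hr : ∀ g ∈ G, ∀ x y, r x y → r (g x) (g y) := by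
    rintro g hg _ _ ⟨h, hh, rfl, rfl⟩
    exact ⟨g * h, G.mul_mem hg hh, rfl, rfl⟩
  have hrab : r a b := ⟨1, G.one_mem, rfl, rfl⟩
  have hflip : ∀ g ∈ G, ∀ x y, (f (g x) = f x ↔ f (g y) = f y) := by
    intro g hg x y
    refine (hG.eq_of_invariant hr hrab hab (φ := fun x => f (g x) = f x) ?_ x y).to_iff
    rintro _ _ ⟨h, hh, rfl, rfl⟩
    refine propext ((eq_iff_eq_iff_of_eq_or_eq (hf _) (hf _) (hf _) (hf _)).mpr
      (iff_of_false (hsep h hh) ?_))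
    simpa using hsep (g * h) (G.mul_mem hg hh)
  have hker : ∀ g ∈ G, ∀ x y, f x = f y → f (g x) = f (g y) := fun g hg x y =>
    ((eq_iff_eq_iff_of_eq_or_eq (hf _) (hf _) (hf _) (hf _)).mp (hflip g hg x y)).mp
  intro x y hxy
  by_contra hne
  exact hsep 1 G.one_mem (hG.eq_of_invariant hker hxy hne (fun _ _ h => h) a b)

end IsPrimitive

theorem exists_eq_or_eq_of_rank_eq_two {f : Ω → Ω} (hf : rank f = 2) :
    ∃ c d, ∀ x, f x = c ∨ f x = d := by
  obtain ⟨c, d, -, himg⟩ := Finset.card_eq_two.mp hf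
  refine ⟨c, d, fun x => ?_⟩
  simpa [himg] using Finset.mem_image_of_mem f (Finset.mem_univ x)

theorem rank_eq_card_of_injective {f : Ω → Ω} (hf : Function.Injective f) :
    rank f = Fintype.card Ω :=
  Finset.card_image_of_injective _ hf

theorem synchronizes_of_apply_eq {α : Type*} {G : Subgroup (Equiv.Perm α)} {f : α → α} {c d : α}
    (hf : ∀ x, f x = c ∨ f x = d) {g : Equiv.Perm α} (hg : g ∈ G) (hcd : f (g c) = f (g d)) :
    Synchronizes G f := by
  have hfS : f ∈ genSemigroup G f := Subsemigroup.subset_closure (Set.mem_union_right _ rfl)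
  have hgS : (⇑g : Function.End α) ∈ genSemigroup G f :=
    Subsemigroup.subset_closure (Set.mem_union_left _ ⟨g, hg, rfl⟩)
  refine ⟨_, mul_mem (mul_mem hfS hgS) hfS, f (g c), fun x => ?_⟩
  show f (g (f x)) = f (g c)
  rcases hf x with h | h <;> rw [h]
  exact hcd.symm

theorem stmt17 (hn : 2 < Fintype.card Ω) (G : Subgroup (Equiv.Perm Ω))
    (hG : IsPrimitive G) (f : Ω → Ω) (hf : rank f = 2) : Synchronizes G f := by
  obtain ⟨c, d, hcd⟩ := exists_eq_or_eq_of_rank_eq_two hf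
  by_cases hcol : ∃ g ∈ G, f (g c) = f (g d)
  · obtain ⟨g, hg, hgcd⟩ := hcol
    exact synchronizes_of_apply_eq hcd hg hgcd
  · push Not at hcol
    have := rank_eq_card_of_injective (hG.injective_of_forall_apply_ne hcd hcol)
    omega
end
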